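/- arXiv:2012.14202 — 4 statements merged into one kernel-verified Lean document; each statement's English description precedes it below -/
import Mathlib

section
/- Let C ⊆ ℝ^k be a full cone and let {C_1,…,C_p} be a sector decomposition of C. If W = C_i ∩ C_ℓ is a wall for some i ≠ ℓ, then the pair of indices is unique: for any i′ ≠ ℓ′ with C_{i′} ∩ C_{ℓ′} = W one has {i′, ℓ′} = {i, ℓ}. -/
/-
The span of the wall `W = C_i ∩ C_ℓ` is a hyperplane `ker f`. If two full cones `X, Y ⊇ W` had
interior points `a, b` with `f a`, `f b` of the same sign, rescaling `b` gives `f a = f b`, so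
`a - b ∈ span W = W - W`, i.e. `a + w₂ = b + w₁` with `w₁, w₂ ∈ W`; this is an interior point of
`X ∩ Y`. So the cones of the decomposition containing `W` lie on alternating sides of `ker f`,
and there cannot be three of them.
-/

noncomputable section

/-- The conic hull of a set `S`: all finite nonnegative real linear combinations
of elements of `S`. -/
def coneHull {V : Type*} [AddCommGroup V] [Module ℝ V] (S : Set V) : Set V :=
  { x | ∃ (n : ℕ) (c : Fin n → ℝ) (v : Fin n → V),
      (∀ i, 0 ≤ c i) ∧ (∀ i, v i ∈ S) ∧ x = ∑ i, c i • v i }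

/-- A cone is the conic hull of a finite set. -/
def IsCone {V : Type*} [AddCommGroup V] [Module ℝ V] (C : Set V) : Prop :=
  ∃ S : Finset V, C = coneHull (S : Set V)

/-- The dimension of a cone: the dimension of its linear span. -/
def coneDim {V : Type*} [AddCommGroup V] [Module ℝ V] (C : Set V) : ℕ :=
  Module.finrank ℝ (Submodule.span ℝ C)

/-- The rank of a cone: the minimum cardinality of a finite generating set. -/
def coneRank {V : Type*} [AddCommGroup V] [Module ℝ V] (C : Set V) : ℕ :=
  sInf { r : ℕ | ∃ S : Finset V, S.card = r ∧ C = coneHull (S : Set V) }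

/-- A full cone: a cone whose dimension equals the ambient dimension. -/
def IsFullCone {V : Type*} [AddCommGroup V] [Module ℝ V] (C : Set V) : Prop :=
  IsCone C ∧ coneDim C = Module.finrank ℝ V

/-- A sector: a cone whose rank equals its dimension. -/
def IsSector {V : Type*} [AddCommGroup V] [Module ℝ V] (C : Set V) : Prop :=
  IsCone C ∧ coneRank C = coneDim C

/-- A sector decomposition of a full cone `C`: a finite family of subcones, each a full
sector, whose union is `C`, with pairwise intersections of empty interior. -/
def IsSectorDecomposition {V : Type*} [AddCommGroup V] [Module ℝ V] [TopologicalSpace V]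
    {p : ℕ} (C : Set V) (F : Fin p → Set V) : Prop :=
  (∀ i, F i ⊆ C) ∧ (∀ i, IsSector (F i) ∧ IsFullCone (F i)) ∧
  (C = ⋃ i, F i) ∧ ∀ i j, i ≠ j → interior (F i ∩ F j) = ∅

/-- The intersection of two cones is a wall (of dimension `d`, one less than the ambient
dimension) if it is a cone of dimension `d`. -/
def IsWallDim {V : Type*} [AddCommGroup V] [Module ℝ V] (C C' : Set V) (d : ℕ) : Prop :=
  IsCone (C ∩ C') ∧ coneDim (C ∩ C') = d

open Module Submodule
open scoped Pointwise

lemma Submodule.exists_mem_notMem_of_isOpen {𝕜 V : Type*} [NontriviallyNormedField 𝕜]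
    [AddCommGroup V] [Module 𝕜 V] [TopologicalSpace V] [ContinuousAdd V] [ContinuousSMul 𝕜 V]
    {H : Submodule 𝕜 V} (hH : H ≠ ⊤) {U : Set V} (hU : IsOpen U) (hne : U.Nonempty) :
    ∃ a ∈ U, a ∉ H := by
  by_contra! h
  exact hH (H.eq_top_of_nonempty_interior' (hne.mono (interior_maximal h hU)))

lemma Submodule.exists_dual_ker_eq {K V : Type*} [Field K] [AddCommGroup V] [Module K V]
    [FiniteDimensional K V] {H : Submodule K V} (hH : finrank K H + 1 = finrank K V) :
    ∃ f : Dual K V, LinearMap.ker f = H := by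
  have hlt : H < ⊤ := lt_top_iff_ne_top.2 fun h => by
    rw [h, finrank_top] at hH
    omega
  obtain ⟨f, hf, hmap⟩ := exists_dual_map_eq_bot_of_lt_top hlt inferInstance
  refine ⟨f, (eq_of_le_of_finrank_eq (fun x hx => ?_) ?_).symm⟩
  · simpa [hmap] using mem_map_of_mem (f := f) hx
  · have := Module.Dual.finrank_ker_add_one_of_ne_zero hf
    omega

namespace PointedCone

section Field

variable {𝕜 E : Type*} [Field 𝕜] [LinearOrder 𝕜] [IsStrictOrderedRing 𝕜] [AddCommGroup E]
  [Module 𝕜 E]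

lemma coe_span_eq_sub (C : PointedCone 𝕜 E) :
    (span 𝕜 (C : Set E) : Set E) = (C : Set E) - (C : Set E) := by
  refine subset_antisymm (fun x hx => ?_) ?_
  · induction hx using Submodule.span_induction with
    | mem x hx => exact ⟨x, hx, 0, C.zero_mem, sub_zero x⟩
    | zero => exact ⟨0, C.zero_mem, 0, C.zero_mem, sub_zero 0⟩
    | add x y _ _ hx hy =>
      obtain ⟨x₁, hx₁, x₂, hx₂, rfl⟩ := hx
      obtain ⟨y₁, hy₁, y₂, hy₂, rfl⟩ := hy
      exact ⟨x₁ + y₁, C.add_mem hx₁ hy₁, x₂ + y₂, C.add_mem hx₂ hy₂, add_sub_add_comm ..⟩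
    | smul r x _ hx =>
      obtain ⟨x₁, hx₁, x₂, hx₂, rfl⟩ := hx
      rcases le_total 0 r with hr | hr
      · exact ⟨r • x₁, C.smul_mem hr hx₁, r • x₂, C.smul_mem hr hx₂, (smul_sub r x₁ x₂).symm⟩
      · refine ⟨(-r) • x₂, C.smul_mem (neg_nonneg.2 hr) hx₂,
          (-r) • x₁, C.smul_mem (neg_nonneg.2 hr) hx₁, ?_⟩
        simp only [neg_smul, neg_sub_neg, smul_sub]
  · rintro _ ⟨y, hy, z, hz, rfl⟩
    exact sub_mem (Submodule.subset_span hy) (Submodule.subset_span hz)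

end Field

section Topology

variable {E : Type*} [AddCommGroup E] [Module ℝ E] [TopologicalSpace E]

lemma smul_mem_interior [ContinuousConstSMul ℝ E] (C : PointedCone ℝ E) {c : ℝ} (hc : 0 < c)
    {x : E} (hx : x ∈ interior (C : Set E)) : c • x ∈ interior (C : Set E) := by
  have hsub : c • (C : Set E) ⊆ (C : Set E) := by
    rintro _ ⟨y, hy, rfl⟩
    exact C.smul_mem hc.le hy
  exact interior_mono hsub (interior_smul₀ hc.ne' (C : Set E) ▸ Set.smul_mem_smul_set hx)

lemma add_mem_interior [ContinuousAdd E] (C : PointedCone ℝ E) {x y : E} (hx : x ∈ C)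
    (hy : y ∈ interior (C : Set E)) : x + y ∈ interior (C : Set E) := by
  have hsub : (C : Set E) + (C : Set E) ⊆ (C : Set E) := by
    rintro _ ⟨u, hu, v, hv, rfl⟩
    exact C.add_mem hu hv
  exact interior_mono hsub (subset_interior_add_right (Set.add_mem_add hx hy))

lemma apply_mul_apply_nonpos_of_interior_inter_eq_empty [ContinuousAdd E]
    [ContinuousConstSMul ℝ E] {W X Y : PointedCone ℝ E} {f : Dual ℝ E}
    (hW : span ℝ (W : Set E) = LinearMap.ker f) (hWX : W ≤ X) (hWY : W ≤ Y)
    (hXY : interior ((X : Set E) ∩ Y) = ∅) {a b : E} (ha : a ∈ interior (X : Set E))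
    (hb : b ∈ interior (Y : Set E)) : f a * f b ≤ 0 := by
  by_contra! hpos
  have hfb : f b ≠ 0 := fun h => by simp [h] at hpos
  set c := f a / f b
  have hcb : c • b ∈ interior (Y : Set E) :=
    Y.smul_mem_interior (div_pos_iff.2 (mul_pos_iff.1 hpos)) hb
  have hker : a - c • b ∈ (span ℝ (W : Set E) : Set E) := by
    rw [hW, SetLike.mem_coe, LinearMap.mem_ker, map_sub, map_smul, smul_eq_mul,
      div_mul_cancel₀ _ hfb, sub_self]
  obtain ⟨w₁, hw₁, w₂, hw₂, hdiff⟩ := W.coe_span_eq_sub ▸ hker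
  have hx : w₂ + a = w₁ + c • b := by
    rw [add_comm]
    exact (sub_eq_sub_iff_add_eq_add.1 hdiff).symm
  have hmem : w₂ + a ∈ interior ((X : Set E) ∩ Y) := by
    rw [interior_inter]
    exact ⟨X.add_mem_interior (hWX hw₂) ha, hx ▸ Y.add_mem_interior (hWY hw₁) hcb⟩
  simp [hXY] at hmem

end Topology

section FiniteDimensional

variable {V : Type*} [NormedAddCommGroup V] [NormedSpace ℝ V] [FiniteDimensional ℝ V]

lemma interior_nonempty_iff_span_eq_top (C : PointedCone ℝ V) :
    (interior (C : Set V)).Nonempty ↔ span ℝ (C : Set V) = ⊤ := by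
  rw [C.convex.interior_nonempty_iff_affineSpan_eq_top,
    AffineSubspace.affineSpan_eq_top_iff_vectorSpan_eq_top_of_nonempty ℝ _ _ ⟨0, C.zero_mem⟩,
    vectorSpan_eq_span_vsub_set_right ℝ C.zero_mem]
  simp

lemma not_inf_le_of_interior_inter_eq_empty {A B D : PointedCone ℝ V}
    (hA : span ℝ (A : Set V) = ⊤) (hB : span ℝ (B : Set V) = ⊤) (hD : span ℝ (D : Set V) = ⊤)
    (hwall : finrank ℝ (span ℝ ((A : Set V) ∩ B)) = finrank ℝ V - 1)
    (hAB : interior ((A : Set V) ∩ B) = ∅) (hAD : interior ((A : Set V) ∩ D) = ∅)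
    (hBD : interior ((B : Set V) ∩ D) = ∅) : ¬ A ⊓ B ≤ D := by
  intro hWD
  set W := A ⊓ B
  have hWc : (W : Set V) = (A : Set V) ∩ B := rfl
  rw [← hWc] at hwall hAB
  have hW : span ℝ (W : Set V) ≠ ⊤ := fun h =>
    (W.interior_nonempty_iff_span_eq_top.2 h).ne_empty hAB
  obtain ⟨f, hf⟩ := exists_dual_ker_eq (H := span ℝ (W : Set V))
    (by have := Submodule.finrank_lt hW; omega)
  have hside (X : PointedCone ℝ V) (hX : span ℝ (X : Set V) = ⊤) :
      ∃ a ∈ interior (X : Set V), f a ≠ 0 :=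
    exists_mem_notMem_of_isOpen (hf ▸ hW) isOpen_interior
      (X.interior_nonempty_iff_span_eq_top.2 hX)
  obtain ⟨a, ha, hfa⟩ := hside A hA
  obtain ⟨b, hb, hfb⟩ := hside B hB
  obtain ⟨d, hd, hfd⟩ := hside D hD
  have hab := apply_mul_apply_nonpos_of_interior_inter_eq_empty hf.symm inf_le_left
    inf_le_right hAB ha hb
  have had := apply_mul_apply_nonpos_of_interior_inter_eq_empty hf.symm inf_le_left hWD hAD ha hd
  have hbd := apply_mul_apply_nonpos_of_interior_inter_eq_empty hf.symm inf_le_right hWD hBD hb hd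
  have hsq : 0 < f a * f b * (f a * f d) * (f b * f d) := by
    rw [show f a * f b * (f a * f d) * (f b * f d) = (f a * f b * f d) ^ 2 by ring]
    positivity
  exact hsq.not_ge (mul_nonpos_of_nonneg_of_nonpos (mul_nonneg_of_nonpos_of_nonpos hab had) hbd)

end FiniteDimensional

end PointedCone

section ConeHull

variable {V : Type*} [AddCommGroup V] [Module ℝ V]

lemma coneHull_eq_hull (S : Set V) : coneHull S = (PointedCone.hull ℝ S : Set V) := by
  ext x
  rw [SetLike.mem_coe, Submodule.mem_span_set']
  constructor
  · rintro ⟨n, c, v, hc, hv, rfl⟩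
    exact ⟨n, fun i => ⟨c i, hc i⟩, fun i => ⟨v i, hv i⟩, rfl⟩
  · rintro ⟨n, c, v, rfl⟩
    exact ⟨n, fun i => c i, fun i => v i, fun i => (c i).2, fun i => (v i).2, rfl⟩

lemma IsCone.exists_pointedCone {C : Set V} (hC : IsCone C) :
    ∃ K : PointedCone ℝ V, (K : Set V) = C := by
  obtain ⟨S, rfl⟩ := hC
  exact ⟨_, (coneHull_eq_hull _).symm⟩

lemma IsFullCone.span_eq_top [FiniteDimensional ℝ V] {C : Set V} (hC : IsFullCone C) :
    span ℝ C = ⊤ :=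
  eq_top_of_finrank_eq hC.2

end ConeHull

lemma IsFullCone.not_inter_subset {V : Type*} [NormedAddCommGroup V] [NormedSpace ℝ V]
    [FiniteDimensional ℝ V] {A B D : Set V} (hA : IsFullCone A) (hB : IsFullCone B)
    (hD : IsFullCone D) (hwall : coneDim (A ∩ B) = finrank ℝ V - 1)
    (hAB : interior (A ∩ B) = ∅) (hAD : interior (A ∩ D) = ∅) (hBD : interior (B ∩ D) = ∅) :
    ¬ A ∩ B ⊆ D := by
  obtain ⟨A, rfl⟩ := hA.1.exists_pointedCone
  obtain ⟨B, rfl⟩ := hB.1.exists_pointedCone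
  obtain ⟨D, rfl⟩ := hD.1.exists_pointedCone
  exact PointedCone.not_inf_le_of_interior_inter_eq_empty hA.span_eq_top hB.span_eq_top
    hD.span_eq_top hwall hAB hAD hBD

theorem stmt_1_general {k p : ℕ} (C : Set (Fin k → ℝ)) (F : Fin p → Set (Fin k → ℝ))
    (hdecomp : IsSectorDecomposition C F)
    (i l : Fin p) (hil : i ≠ l) (W : Set (Fin k → ℝ))
    (hW : W = F i ∩ F l) (hwall : IsWallDim (F i) (F l) (k - 1)) :
    ∀ i' l' : Fin p, i' ≠ l' → F i' ∩ F l' = W →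
      (i' = i ∧ l' = l) ∨ (i' = l ∧ l' = i) := by
  intro i' l' hne hW'
  obtain ⟨-, hsect, -, hdisj⟩ := hdecomp
  have hfull (j : Fin p) : IsFullCone (F j) := (hsect j).2
  have hwall' : coneDim (F i ∩ F l) = finrank ℝ (Fin k → ℝ) - 1 := by
    rw [finrank_fin_fun]
    exact hwall.2
  have mem_pair (m : Fin p) (hm : W ⊆ F m) : m = i ∨ m = l := by
    by_contra! h
    exact (hfull i).not_inter_subset (hfull l) (hfull m) hwall' (hdisj i l hil)
      (hdisj i m (Ne.symm h.1)) (hdisj l m (Ne.symm h.2)) (hW ▸ hm)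
  rcases mem_pair i' (hW' ▸ Set.inter_subset_left) with rfl | rfl <;>
    rcases mem_pair l' (hW' ▸ Set.inter_subset_right) with rfl | rfl <;> simp_all

/-- In a sector decomposition of a full cone `C ⊆ ℝ^k`, if `W = C_i ∩ C_ℓ`
is a wall (for `i ≠ ℓ`), then the pair of indices producing this wall is unique. -/
theorem stmt_1 {k p : ℕ} (C : Set (Fin k → ℝ)) (F : Fin p → Set (Fin k → ℝ))
    (hC : IsFullCone C) (hdecomp : IsSectorDecomposition C F)
    (i l : Fin p) (hil : i ≠ l) (W : Set (Fin k → ℝ))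
    (hW : W = F i ∩ F l) (hwall : IsWallDim (F i) (F l) (k - 1)) :
    ∀ i' l' : Fin p, i' ≠ l' → F i' ∩ F l' = W →
      (i' = i ∧ l' = l) ∨ (i' = l ∧ l' = i) :=
  stmt_1_general C F hdecomp i l hil W hW hwall
end
end

section
/- Let w = (0,1,0,1,0,1,−1) ∈ ℝ^7 and let C be the conic hull of the 8 vectors {e_1, e_2, e_3, e_4, e_5, e_6, e_7, w}, where e_1,…,e_7 is the standard basis of ℝ^7. Then the rank of C is 8: there exists no set S ⊆ ℝ^7 of cardinality at most 7 whose conic hull equals C. -/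
noncomputable section

/-- The special vector `w = (0,1,0,1,0,1,−1) ∈ ℝ^7`. -/
def wVec : Fin 7 → ℝ := ![0, 1, 0, 1, 0, 1, -1]

/-- The cone generated by the 7 standard basis vectors of `ℝ^7` together with `w`. -/
def triangleCone : Set (Fin 7 → ℝ) :=
  coneHull ((Set.range fun i : Fin 7 => (Pi.single i 1 : Fin 7 → ℝ)) ∪ {wVec})

/-!
Each generator `g` of the cone spans an exposed ray: some linear form `φ_g` is nonnegative on
the generators and vanishes on them exactly at `g`. If the cone is also the conic hull of `S`,
then writing `g` as a nonnegative combination of elements of `S` only uses elements killed by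
`φ_g`, and these lie on the line `ℝ g`; so `S` contains a nonzero vector on each of the eight
lines `ℝ g`, and these vectors are distinct because `φ_g` vanishes on no other generator.
-/

open Set

section coneHull

variable {V : Type*} [AddCommGroup V] [Module ℝ V]

theorem subset_coneHull (S : Set V) : S ⊆ coneHull S :=
  fun x hx => ⟨1, fun _ => 1, fun _ => x, fun _ => zero_le_one, fun _ => hx, by simp⟩

theorem apply_nonneg_of_mem_coneHull {S : Set V} {f : V →ₗ[ℝ] ℝ} (hf : ∀ s ∈ S, 0 ≤ f s)
    {x : V} (hx : x ∈ coneHull S) : 0 ≤ f x := by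
  obtain ⟨n, c, v, hc, hv, rfl⟩ := hx
  rw [map_sum]
  exact Finset.sum_nonneg fun i _ => by
    rw [map_smul, smul_eq_mul]; exact mul_nonneg (hc i) (hf _ (hv i))

theorem coeff_eq_zero_or_apply_eq_zero {n : ℕ} {c : Fin n → ℝ} {v : Fin n → V}
    {f : V →ₗ[ℝ] ℝ} (hc : ∀ i, 0 ≤ c i) (hv : ∀ i, 0 ≤ f (v i))
    (h : f (∑ i, c i • v i) = 0) (i : Fin n) : c i = 0 ∨ f (v i) = 0 := by
  simp only [map_sum, map_smul, smul_eq_mul] at h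
  exact mul_eq_zero.1 <| (Finset.sum_eq_zero_iff_of_nonneg fun j _ =>
    mul_nonneg (hc j) (hv j)).1 h i (Finset.mem_univ i)

variable {S : Set V} {f : V →ₗ[ℝ] ℝ} {r : V}

theorem mem_span_singleton_of_mem_coneHull (hf : ∀ s ∈ S, 0 ≤ f s)
    (hker : ∀ s ∈ S, f s = 0 → s ∈ ℝ ∙ r) {x : V} (hx : x ∈ coneHull S) (hfx : f x = 0) :
    x ∈ ℝ ∙ r := by
  obtain ⟨n, c, v, hc, hv, rfl⟩ := hx
  refine Submodule.sum_mem _ fun i _ => ?_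
  rcases coeff_eq_zero_or_apply_eq_zero hc (fun j => hf _ (hv j)) hfx i with h | h
  · simp [h]
  · exact Submodule.smul_mem _ _ (hker _ (hv i) h)

theorem exists_mem_ne_zero_mem_span_singleton (hf : ∀ s ∈ S, 0 ≤ f s)
    (hker : ∀ s ∈ S, f s = 0 → s ∈ ℝ ∙ r) (hr : r ∈ coneHull S) (hr0 : r ≠ 0)
    (hfr : f r = 0) : ∃ s ∈ S, s ≠ 0 ∧ s ∈ ℝ ∙ r := by
  obtain ⟨n, c, v, hc, hv, rfl⟩ := hr
  obtain ⟨i, -, hi⟩ := Finset.exists_ne_zero_of_sum_ne_zero hr0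
  rcases coeff_eq_zero_or_apply_eq_zero hc (fun j => hf _ (hv j)) hfr i with h | h
  · simp [h] at hi
  · exact ⟨v i, hv i, right_ne_zero_of_smul hi, hker _ (hv i) h⟩

end coneHull

section rank

variable {V : Type*} [AddCommGroup V] [Module ℝ V] {ι : Type*} [Fintype ι]
  {gen : ι → V} {φ : ι → V →ₗ[ℝ] ℝ}

theorem card_le_card_of_coneHull_eq (hgen : ∀ i, gen i ≠ 0)
    (hφ : ∀ i j, 0 ≤ φ i (gen j) ∧ (φ i (gen j) = 0 ↔ i = j)) {S : Finset V}
    (hS : coneHull (S : Set V) = coneHull (range gen)) : Fintype.card ι ≤ S.card := by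
  have hray : ∀ i, ∃ s ∈ S, s ≠ 0 ∧ s ∈ ℝ ∙ gen i := by
    intro i
    have hpos : ∀ x ∈ coneHull (S : Set V), 0 ≤ φ i x := by
      rw [hS]
      exact fun x => apply_nonneg_of_mem_coneHull (by rintro _ ⟨j, rfl⟩; exact (hφ i j).1)
    have hker : ∀ x ∈ coneHull (S : Set V), φ i x = 0 → x ∈ ℝ ∙ gen i := by
      rw [hS]
      refine fun x => mem_span_singleton_of_mem_coneHull
        (by rintro _ ⟨j, rfl⟩; exact (hφ i j).1) ?_
      rintro _ ⟨j, rfl⟩ h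
      rw [← (hφ i j).2.1 h]
      exact Submodule.mem_span_singleton_self _
    exact exists_mem_ne_zero_mem_span_singleton
      (fun s hs => hpos s (subset_coneHull _ hs)) (fun s hs => hker s (subset_coneHull _ hs))
      (hS ▸ subset_coneHull _ ⟨i, rfl⟩) (hgen i) ((hφ i i).2.2 rfl)
  choose s hsS hs0 hsray using hray
  have hinj : Function.Injective s := by
    intro i j hij
    have hi : φ i (s i) = 0 :=
      (Submodule.span_singleton_le_iff_mem _ (LinearMap.ker (φ i))).2 ((hφ i i).2.2 rfl)
        (hsray i)
    obtain ⟨t, ht⟩ := Submodule.mem_span_singleton.1 (hsray j)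
    rw [hij, ← ht, map_smul, smul_eq_mul] at hi
    have ht0 : t ≠ 0 := by rintro rfl; exact hs0 j (by simp [← ht])
    exact (hφ i j).2.1 ((mul_eq_zero.1 hi).resolve_left ht0)
  rw [← Finset.card_univ]
  exact Finset.card_le_card_of_injOn s (fun i _ => hsS i) hinj.injOn

theorem coneRank_coneHull_range (hgen : ∀ i, gen i ≠ 0)
    (hφ : ∀ i j, 0 ≤ φ i (gen j) ∧ (φ i (gen j) = 0 ↔ i = j)) :
    coneRank (coneHull (range gen)) = Fintype.card ι := by
  classical
  have hinj : Function.Injective gen := fun i j hij =>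
    (hφ i j).2.1 (hij ▸ (hφ i i).2.2 rfl)
  have hmem : Fintype.card ι ∈ {r : ℕ | ∃ S : Finset V, S.card = r ∧
      coneHull (range gen) = coneHull (S : Set V)} :=
    ⟨Finset.univ.image gen, by rw [Finset.card_image_of_injective _ hinj, Finset.card_univ],
      by rw [Finset.coe_image, Finset.coe_univ, image_univ]⟩
  refine le_antisymm (Nat.sInf_le hmem) (le_csInf ⟨_, hmem⟩ ?_)
  rintro _ ⟨S, rfl, hS⟩
  exact card_le_card_of_coneHull_eq hgen hφ hS.symm

end rank

def triangleGen : Fin 8 → Fin 7 → ℝ :=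
  ![Pi.single 0 1, Pi.single 1 1, Pi.single 2 1, Pi.single 3 1, Pi.single 4 1, Pi.single 5 1,
    Pi.single 6 1, wVec]

/-- Row `i` is a nonnegative combination of the facet inequalities `x j ≥ 0` (`j ≤ 5`) and
`x j + x 6 ≥ 0` (`j = 1, 3, 5`) of the cone, chosen to vanish only at `triangleGen i`. -/
def triangleWeights : Fin 8 → Fin 7 → ℝ :=
  ![![0, 2, 1, 1, 1, 1, 1],
    ![1, 0, 1, 2, 1, 1, 1],
    ![1, 2, 0, 1, 1, 1, 1],
    ![1, 2, 1, 0, 1, 1, 1],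
    ![1, 2, 1, 1, 0, 1, 1],
    ![1, 2, 1, 1, 1, 0, 1],
    ![1, 1, 1, 1, 1, 1, 0],
    ![1, 1, 1, 1, 1, 1, 3]]

def triangleDual (i : Fin 8) : (Fin 7 → ℝ) →ₗ[ℝ] ℝ := dotProductBilin ℝ ℝ (triangleWeights i)

theorem triangleCone_eq_coneHull_range : triangleCone = coneHull (range triangleGen) := by
  have : triangleGen = Fin.snoc (fun i => Pi.single i 1) wVec := by
    funext i; fin_cases i <;> rfl
  rw [this, Fin.range_snoc, insert_eq, union_comm]; rfl

theorem triangleGen_ne_zero (i : Fin 8) : triangleGen i ≠ 0 := by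
  fin_cases i <;> simp [triangleGen, wVec, funext_iff, Fin.forall_fin_succ]

theorem triangleDual_triangleGen (i j : Fin 8) :
    0 ≤ triangleDual i (triangleGen j) ∧ (triangleDual i (triangleGen j) = 0 ↔ i = j) := by
  fin_cases i <;> fin_cases j <;>
    simp [triangleDual, triangleWeights, triangleGen, wVec, dotProduct_single] <;> norm_num

/-- The rank of the cone `C = coneHull{e_1,…,e_7,w}` is `8`: there is no set
`S ⊆ ℝ^7` of cardinality at most `7` whose conic hull is `C`. -/
theorem stmt_6 :
    coneRank triangleCone = 8 ∧
    ¬ ∃ S : Finset (Fin 7 → ℝ), S.card ≤ 7 ∧ coneHull (S : Set (Fin 7 → ℝ)) = triangleCone := by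
  rw [triangleCone_eq_coneHull_range]
  refine ⟨by simpa using coneRank_coneHull_range triangleGen_ne_zero triangleDual_triangleGen, ?_⟩
  rintro ⟨S, hS7, hS⟩
  have := card_le_card_of_coneHull_eq triangleGen_ne_zero triangleDual_triangleGen hS
  rw [Fintype.card_fin] at this
  omega
end
end

section
/- Let w = (0,1,0,1,0,1,−1) ∈ ℤ^7 and let M ⊆ ℤ^7 be the additive submonoid generated by the 8 vectors {e_1, e_2, e_3, e_4, e_5, e_6, e_7, w} (all finite ℕ-linear combinations of these vectors), where e_1,…,e_7 is the standard basis of ℤ^7. Then the set of irreducible elements of M is exactly {e_1, e_2, e_3, e_4, e_5, e_6, e_7, w}. -/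
/-!
An irreducible element `x` of the closure of a set `S` of nonzero generators is a generator:
writing `x = s + y` with `s ∈ S`, irreducibility forces `y = 0`. Conversely, a generator `s` is
irreducible as soon as some additive functional `h` is `≥ 1` on all generators and `h s = 1`,
since then `h ≥ 1` on every nonzero element of the closure. Here the all-ones functional
certifies `e_1, …, e_7`, and the functional `(1, 1, 1, 1, 1, 1, 2)` certifies `w`.
-/

/-- The 8 generators `e_1,…,e_7, w ∈ ℤ^7`, with `w = (0,1,0,1,0,1,−1)`. -/
def gens17 : Fin 8 → Fin 7 → ℤ :=
  ![![1, 0, 0, 0, 0, 0, 0],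
    ![0, 1, 0, 0, 0, 0, 0],
    ![0, 0, 1, 0, 0, 0, 0],
    ![0, 0, 0, 1, 0, 0, 0],
    ![0, 0, 0, 0, 1, 0, 0],
    ![0, 0, 0, 0, 0, 1, 0],
    ![0, 0, 0, 0, 0, 0, 1],
    ![0, 1, 0, 1, 0, 1, -1]]

open Matrix

namespace AddSubmonoid

variable {A : Type*}

def IsIrreducible [AddZeroClass A] (M : AddSubmonoid A) (x : A) : Prop :=
  x ∈ M ∧ x ≠ 0 ∧ ¬ ∃ a ∈ M, ∃ b ∈ M, a ≠ 0 ∧ b ≠ 0 ∧ x = a + b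

section AddMonoid

variable [AddMonoid A] {S : Set A}

theorem exists_add_of_mem_closure_of_ne_zero {x : A} (hx : x ∈ closure S) (hx0 : x ≠ 0) :
    ∃ s ∈ S, ∃ y ∈ closure S, x = s + y := by
  induction hx using closure_induction_left with
  | zero => exact absurd rfl hx0
  | add_left s hs y hy _ => exact ⟨s, hs, y, hy, rfl⟩

theorem mem_of_isIrreducible_closure (hS : (0 : A) ∉ S) {x : A}
    (hx : (closure S).IsIrreducible x) : x ∈ S := by
  obtain ⟨hxS, hx0, hdecomp⟩ := hx
  obtain ⟨s, hs, y, hy, rfl⟩ := exists_add_of_mem_closure_of_ne_zero hxS hx0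
  obtain rfl | hy0 := eq_or_ne y 0
  · rwa [add_zero]
  · exact absurd ⟨s, subset_closure hs, y, hy, ne_of_mem_of_not_mem hs hS, hy0, rfl⟩ hdecomp

theorem one_le_of_mem_closure_of_ne_zero (h : A →+ ℤ) (hS : ∀ s ∈ S, 1 ≤ h s) {x : A}
    (hx : x ∈ closure S) (hx0 : x ≠ 0) : 1 ≤ h x := by
  have nonneg : ∀ y ∈ closure S, 0 ≤ h y := fun y hy => by
    induction hy using closure_induction with
    | mem s hs => exact zero_le_one.trans (hS s hs)
    | zero => simp
    | add a b _ _ ha hb => rw [map_add]; positivity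
  obtain ⟨s, hs, y, hy, rfl⟩ := exists_add_of_mem_closure_of_ne_zero hx hx0
  rw [map_add]
  linarith [hS s hs, nonneg y hy]

theorem isIrreducible_closure_of_map_eq_one (h : A →+ ℤ) (hS : ∀ s ∈ S, 1 ≤ h s) {s : A}
    (hs : s ∈ S) (hs1 : h s = 1) : (closure S).IsIrreducible s := by
  refine ⟨subset_closure hs, fun hs0 => by simp [hs0] at hs1, ?_⟩
  rintro ⟨a, ha, b, hb, ha0, hb0, rfl⟩
  have := one_le_of_mem_closure_of_ne_zero h hS ha ha0
  have := one_le_of_mem_closure_of_ne_zero h hS hb hb0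
  rw [map_add] at hs1
  omega

end AddMonoid

end AddSubmonoid

theorem zero_notMem_range_gens17 : (0 : Fin 7 → ℤ) ∉ Set.range gens17 := by
  simp only [Set.mem_range, not_exists]
  decide

theorem exists_weight_gens17 (i : Fin 8) :
    ∃ c : Fin 7 → ℤ, (∀ k, 1 ≤ c ⬝ᵥ gens17 k) ∧ c ⬝ᵥ gens17 i = 1 := by
  refine ⟨if i = 7 then ![1, 1, 1, 1, 1, 1, 2] else 1, ?_⟩
  fin_cases i <;> decide

/-- For the additive submonoid `M ⊆ ℤ^7` generated by
`{e_1,…,e_7, w}`, the set of irreducible elements of `M` (nonzero elements not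
expressible as a sum of two nonzero elements of `M`) is exactly `{e_1,…,e_7, w}`. -/
theorem stmt_17 (M : AddSubmonoid (Fin 7 → ℤ))
    (hM : M = AddSubmonoid.closure (Set.range gens17)) :
    {x : Fin 7 → ℤ | x ∈ M ∧ x ≠ 0 ∧
      ¬ ∃ a ∈ M, ∃ b ∈ M, a ≠ 0 ∧ b ≠ 0 ∧ x = a + b} = Set.range gens17 := by
  subst hM
  ext x
  refine ⟨AddSubmonoid.mem_of_isIrreducible_closure zero_notMem_range_gens17, ?_⟩
  rintro ⟨i, rfl⟩
  obtain ⟨c, hc, hci⟩ := exists_weight_gens17 i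
  exact AddSubmonoid.isIrreducible_closure_of_map_eq_one (dotProductBilin ℤ ℤ c).toAddMonoidHom
    (by rintro _ ⟨k, rfl⟩; exact hc k) ⟨i, rfl⟩ hci
end

section
/- Let M ⊆ ℤ^12 be the additive submonoid generated by the 22 vectors v_1,…,v_22 listed in the context (all finite ℕ-linear combinations of these vectors). Then the set of irreducible elements of M is exactly {v_1,…,v_22}. -/
/-!
The sum `φ` of the first nine coordinates is an additive grading with `1 ≤ φ v_i ≤ 2` for every
generator. A decomposition `v_k = a + b` into nonzero elements of `M` would therefore force
`φ a = φ b = 1`, so `a` and `b` would themselves be generators, and a finite check shows that no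
generator is the sum of two generators. Conversely, an irreducible element of a monoid generated
by a set lies in that set.
-/

/-- The 22 Hilbert basis vectors `v_1,…,v_22 ∈ ℤ^12 = ℤ^8 × ℤ^4` of the (model of the)
Knutson-Tao-Goncharov-Shen positive integer cone of the triangulated ideal square. -/
def vZ : Fin 22 → Fin 12 → ℤ :=
  ![![1, 0, 0, 0, 0, 0, 0, 0, 0, 0, 0, 0],
    ![0, 1, 0, 0, 0, 0, 0, 0, 0, 0, 0, 0],
    ![0, 0, 1, 0, 0, 0, 0, 0, 0, 0, 0, 0],
    ![0, 0, 0, 1, 0, 0, 0, 0, 0, 0, 0, 0],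
    ![0, 0, 0, 0, 1, 0, 0, 0, 0, 0, 0, 0],
    ![0, 0, 0, 0, 0, 1, 0, 0, 0, 0, 0, 0],
    ![0, 0, 0, 0, 0, 0, 1, 0, 0, 0, 0, 0],
    ![0, 0, 0, 0, 0, 0, 0, 1, 0, 0, 0, 0],
    ![0, 0, 0, 0, 0, 0, 0, 0, 1, -1, 0, 0],
    ![0, 0, 0, 0, 0, 0, 0, 0, 1, 0, 0, 0],
    ![0, 1, 0, 1, 0, 1, 0, 0, -1, 0, 0, 0],
    ![0, 1, 0, 1, 0, 1, 0, 0, -1, 0, 0, 1],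
    ![0, 0, 0, 1, 0, 0, 0, 0, 0, 0, 1, 0],
    ![0, 0, 0, 0, 0, 1, 0, 1, 0, 0, -1, 0],
    ![0, 0, 1, 0, 0, 0, 0, 1, 0, 1, -1, 0],
    ![0, 0, 0, 0, 1, 0, 0, 0, 0, 0, 1, -1],
    ![0, 0, 0, 0, 0, 0, 0, 1, 1, 0, -1, 0],
    ![0, 1, 0, 1, 0, 1, 0, 0, -1, 0, 1, 0],
    ![0, 0, 0, 1, 0, 0, 0, 0, 0, 0, 0, 1],
    ![0, 0, 1, 0, 0, 0, 0, 0, 0, 1, 0, 0],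
    ![0, 0, 0, 0, 1, 0, 0, 0, 0, 0, 0, -1],
    ![0, 0, 0, 0, 0, 1, 0, 0, 0, -1, 0, 0]]

namespace AddSubmonoid

variable {A : Type*} [AddCommMonoid A]

def IrreducibleIn (M : AddSubmonoid A) (x : A) : Prop :=
  x ∈ M ∧ x ≠ 0 ∧ ¬ ∃ a ∈ M, ∃ b ∈ M, a ≠ 0 ∧ b ≠ 0 ∧ x = a + b

variable {S : Set A}

theorem mem_of_irreducibleIn_closure {x : A} (hx : (closure S).IrreducibleIn x) : x ∈ S := by
  obtain ⟨hxM, hx0, hxirr⟩ := hx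
  suffices
      x ∈ S ∨ x = 0 ∨ ∃ a ∈ closure S, ∃ b ∈ closure S, a ≠ 0 ∧ b ≠ 0 ∧ x = a + b by
    rcases this with h | h | h
    exacts [h, absurd h hx0, absurd h hxirr]
  clear hx0 hxirr
  induction hxM using closure_induction with
  | mem y hy => exact .inl hy
  | zero => exact .inr (.inl rfl)
  | add a b ha hb iha ihb =>
    by_cases ha0 : a = 0
    · simpa [ha0] using ihb
    by_cases hb0 : b = 0
    · simpa [hb0] using iha
    exact .inr (.inr ⟨a, ha, b, hb, ha0, hb0, rfl⟩)

section Graded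

variable {φ : A →+ ℤ} (hφ : ∀ s ∈ S, 1 ≤ φ s)
include hφ

theorem eq_zero_or_one_le_of_mem_closure {x : A} (hx : x ∈ closure S) : x = 0 ∨ 1 ≤ φ x := by
  induction hx using closure_induction with
  | mem y hy => exact .inr (hφ y hy)
  | zero => exact .inl rfl
  | add a b _ _ iha ihb =>
    rcases iha with rfl | ha
    · simpa using ihb
    rcases ihb with rfl | hb
    · simpa using Or.inr ha
    exact .inr (by rw [map_add]; omega)

theorem eq_zero_or_mem_of_mem_closure_of_le_one {x : A} (hx : x ∈ closure S) :
    φ x ≤ 1 → x = 0 ∨ x ∈ S := by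
  induction hx using closure_induction with
  | mem y hy => exact fun _ => .inr hy
  | zero => exact fun _ => .inl rfl
  | add a b ha hb iha ihb =>
    intro hab
    by_cases ha0 : a = 0
    · simpa [ha0] using ihb (by simpa [ha0] using hab)
    by_cases hb0 : b = 0
    · simpa [hb0] using iha (by simpa [hb0] using hab)
    have := (eq_zero_or_one_le_of_mem_closure hφ ha).resolve_left ha0
    have := (eq_zero_or_one_le_of_mem_closure hφ hb).resolve_left hb0
    rw [map_add] at hab
    omega

theorem irreducibleIn_closure_of_le_two {s : A} (hs : s ∈ S) (hs2 : φ s ≤ 2)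
    (hsum : ∀ t ∈ S, ∀ u ∈ S, t + u ≠ s) : (closure S).IrreducibleIn s := by
  refine ⟨subset_closure hs, fun h => by simpa [h] using hφ s hs, ?_⟩
  rintro ⟨a, ha, b, hb, ha0, hb0, rfl⟩
  have ha1 := (eq_zero_or_one_le_of_mem_closure hφ ha).resolve_left ha0
  have hb1 := (eq_zero_or_one_le_of_mem_closure hφ hb).resolve_left hb0
  rw [map_add] at hs2
  have haS := (eq_zero_or_mem_of_mem_closure_of_le_one hφ ha (by omega)).resolve_left ha0
  have hbS := (eq_zero_or_mem_of_mem_closure_of_le_one hφ hb (by omega)).resolve_left hb0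
  exact hsum a haS b hbS rfl

theorem setOf_irreducibleIn_closure_eq (hφ2 : ∀ s ∈ S, φ s ≤ 2)
    (hsum : ∀ t ∈ S, ∀ u ∈ S, ∀ s ∈ S, t + u ≠ s) :
    {x | (closure S).IrreducibleIn x} = S :=
  Set.Subset.antisymm (fun _ => mem_of_irreducibleIn_closure)
    fun s hs => irreducibleIn_closure_of_le_two hφ hs (hφ2 s hs)
      fun t ht u hu => hsum t ht u hu s hs

end Graded

end AddSubmonoid

def sumFirstNine : (Fin 12 → ℤ) →+ ℤ :=
  AddMonoidHom.mk' (fun x => x 0 + x 1 + x 2 + x 3 + x 4 + x 5 + x 6 + x 7 + x 8)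
    fun x y => by simp only [Pi.add_apply]; ring

theorem vZ_sumFirstNine_mem_Icc : ∀ k, sumFirstNine (vZ k) ∈ Set.Icc 1 2 := by
  decide +kernel

theorem vZ_add_ne : ∀ i j k, vZ i + vZ j ≠ vZ k := by
  decide +kernel

/-- For the additive submonoid `M ⊆ ℤ^12` generated by `{v_1,…,v_22}`, the
set of irreducible elements of `M` (nonzero elements not expressible as a sum of two
nonzero elements of `M`) is exactly `{v_1,…,v_22}`. -/
theorem stmt_18 (M : AddSubmonoid (Fin 12 → ℤ))
    (hM : M = AddSubmonoid.closure (Set.range vZ)) :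
    {x : Fin 12 → ℤ | x ∈ M ∧ x ≠ 0 ∧
      ¬ ∃ a ∈ M, ∃ b ∈ M, a ≠ 0 ∧ b ≠ 0 ∧ x = a + b} = Set.range vZ := by
  subst hM
  refine AddSubmonoid.setOf_irreducibleIn_closure_eq (φ := sumFirstNine) ?_ ?_ ?_
  · exact Set.forall_mem_range.2 fun k => (vZ_sumFirstNine_mem_Icc k).1
  · exact Set.forall_mem_range.2 fun k => (vZ_sumFirstNine_mem_Icc k).2
  · simpa only [Set.forall_mem_range] using vZ_add_ne
end
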